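/- arXiv:math/0012169 — 2 statements merged into one kernel-verified Lean document; each statement's English description precedes it below -/
import Mathlib

section
/- The 3-polytope P with vertices s=(0,0,0), e=(1,0,0), w=(0,1,0), n=(1,1,0), v_1=(-1,0,1), v_2=(1,1,1), u_1=(0,1,-1), u_2=(2,0,-1) contains no lattice points other than its eight vertices. -/
/-!
The polytope `P` is cut out by the ten facet inequalities `a ⬝ᵥ p ≤ b` listed in `Pfacets`.
Each of them holds at the eight vertices, hence on their convex hull; so a lattice point of `P`
is an integer solution of this linear system, and a short integer case analysis shows that its
only integer solutions are the vertices.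
-/

open Set
open scoped Classical

noncomputable section

abbrev Pt3 := Fin 3 → ℝ

/-- The eight vertices `s, e, w, n, v₁, v₂, u₁, u₂` of the polytope `P` of
Proposition 2.2(1). -/
def Pverts : Finset Pt3 :=
  {![0, 0, 0], ![1, 0, 0], ![0, 1, 0], ![1, 1, 0],
   ![-1, 0, 1], ![1, 1, 1], ![0, 1, -1], ![2, 0, -1]}

theorem dotProduct_le_of_mem_convexHull {ι : Type*} [Fintype ι] {s : Set (ι → ℝ)}
    {a : ι → ℝ} {b : ℝ} (hs : ∀ x ∈ s, a ⬝ᵥ x ≤ b) {p : ι → ℝ}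
    (hp : p ∈ convexHull ℝ s) : a ⬝ᵥ p ≤ b :=
  convexHull_min hs
    (convex_halfSpace_le ⟨dotProduct_add a, fun c x => dotProduct_smul c a x⟩ b) hp

def Pfacets : List (Pt3 × ℝ) :=
  [(![-1, -2, -2], 0), (![-1, -1, -1], 0), (![-1, 1, 0], 1), (![-1, 2, 1], 2),
   (![0, -1, 0], 0), (![0, 1, 0], 1), (![1, -2, 2], 1), (![1, -1, 1], 1),
   (![1, 1, 0], 2), (![1, 2, -1], 3)]

theorem Pverts_facet_le : ∀ f ∈ Pfacets, ∀ v ∈ Pverts, f.1 ⬝ᵥ v ≤ f.2 := by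
  norm_num [Pfacets, Pverts, dotProduct, Fin.sum_univ_three, Matrix.cons_val_two]

theorem lattice_mem_Pverts_of_facet_le (x y z : ℤ)
    (h : ∀ f ∈ Pfacets, f.1 ⬝ᵥ ![(x : ℝ), y, z] ≤ f.2) : ![(x : ℝ), y, z] ∈ Pverts := by
  simp only [Pfacets, List.forall_mem_cons, dotProduct, Fin.sum_univ_three,
    Matrix.cons_val_zero, Matrix.cons_val_one, Matrix.cons_val_two, Matrix.head_cons,
    Matrix.tail_cons] at h
  simp only [Pverts, Finset.mem_insert, Finset.mem_singleton, Matrix.vecCons_inj, and_true]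
  norm_cast at h ⊢
  omega

/-- The polytope `P` contains no lattice points other than its
eight vertices. -/
theorem Pverts_lattice_points :
    ∀ p : Pt3, p ∈ convexHull ℝ (Pverts : Set Pt3) →
      (∀ i, ∃ z : ℤ, p i = (z : ℝ)) → p ∈ Pverts := by
  intro p hp hint
  obtain ⟨x, hx⟩ := hint 0
  obtain ⟨y, hy⟩ := hint 1
  obtain ⟨z, hz⟩ := hint 2
  obtain rfl : p = ![(x : ℝ), y, z] := by
    ext i
    fin_cases i <;> simp [hx, hy, hz]
  exact lattice_mem_Pverts_of_facet_le x y z fun f hf =>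
    dotProduct_le_of_mem_convexHull (Pverts_facet_le f hf) hp
end
end

section
/- Every mismatching dissection of a convex 3-polytope with n vertices has at least n-2 tetrahedra. -/
open Set MeasureTheory
open scoped Classical

noncomputable section

/-- A (geometric) tetrahedron: 4 affinely independent points. -/
def IsTet (σ : Finset Pt3) : Prop :=
  σ.card = 4 ∧ AffineIndependent ℝ (fun p : (σ : Set Pt3) => (p : Pt3))

/-- A dissection of the convex polytope `conv V` using only vertices in `V`:
tetrahedra with pairwise disjoint interiors covering the polytope. -/
def IsDissection (V : Finset Pt3) (D : Finset (Finset Pt3)) : Prop :=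
  (∀ σ ∈ D, IsTet σ ∧ (σ : Set Pt3) ⊆ (V : Set Pt3)) ∧
  (∀ σ ∈ D, ∀ τ ∈ D, σ ≠ τ →
    interior (convexHull ℝ (σ : Set Pt3)) ∩ interior (convexHull ℝ (τ : Set Pt3)) = ∅) ∧
  (⋃ σ ∈ D, convexHull ℝ (σ : Set Pt3)) = convexHull ℝ (V : Set Pt3)

/-- A triangulation: a dissection in which any two tetrahedra meet in a common
(possibly empty) face. -/
def IsTriangulation (V : Finset Pt3) (D : Finset (Finset Pt3)) : Prop :=
  IsDissection V D ∧
  ∀ σ ∈ D, ∀ τ ∈ D,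
    convexHull ℝ (σ : Set Pt3) ∩ convexHull ℝ (τ : Set Pt3)
      = convexHull ℝ ((σ ∩ τ : Finset Pt3) : Set Pt3)

/-!
A tetrahedron `σ` of the dissection is *omnipresent* if no point of the polytope `P = conv V` has
two negative barycentric coordinates with respect to `σ`. An omnipresent `σ` meets every other
tetrahedron `τ` in a common face: the connected interior of `τ` avoids `σ`, hence lies in a single
region `{coord i < 0}`, and the facet hyperplane `{coord i = 0}` separates `σ` from `τ`.

So a mismatching dissection has a non-omnipresent `σ`, and there is a point `o` of `P` with two
negative `σ`-coordinates lying in the interior of some tetrahedron `σ₀`. For every vertex `w` of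
`P` the segment from `w` towards `o` starts inside a tetrahedron `ψ w` with vertex `w`, i.e. `o`
lies in the cone of `ψ w` at `w`. Now `ψ w ≠ σ`, at most four vertices have `ψ w = σ₀`, and `ψ`
is injective on the others, because a point in the cones of a tetrahedron at two of its vertices
lies in that tetrahedron. Hence `n ≤ 4 + (#D - 2)`.
-/

open Filter Topology AffineMap

section Convex

variable {E : Type*} [AddCommGroup E] [Module ℝ E]

theorem convexHull_inter_setOf_nonneg_subset {s : Set E} (f : E →ᵃ[ℝ] ℝ)
    (hf : ∀ x ∈ s, f x ≤ 0) :
    convexHull ℝ s ∩ {x | 0 ≤ f x} ⊆ convexHull ℝ (s ∩ {x | f x = 0}) := by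
  set A := {x | f x ≤ 0 ∧ (f x = 0 → x ∈ convexHull ℝ (s ∩ {x | f x = 0}))}
  have hA : Convex ℝ A := by
    rintro x ⟨hx, hx'⟩ y ⟨hy, hy'⟩ a b ha hb hab
    have hfz : f (a • x + b • y) = a * f x + b * f y := Convex.combo_affine_apply hab
    refine ⟨by rw [hfz]; nlinarith, fun h0 => ?_⟩
    rcases ha.eq_or_lt with rfl | ha'
    · simp_all
    rcases hb.eq_or_lt with rfl | hb'
    · simp_all
    have hfx : f x = 0 := by nlinarith
    have hfy : f y = 0 := by nlinarith
    exact convex_convexHull ℝ _ (hx' hfx) (hy' hfy) ha hb hab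
  rintro x ⟨hxs, hx0⟩
  have hsA : s ⊆ A := fun y hy => ⟨hf y hy, fun h0 => subset_convexHull ℝ _ ⟨hy, h0⟩⟩
  have hxA : x ∈ A := convexHull_min hsA hA hxs
  exact hxA.2 (le_antisymm hxA.1 hx0)

theorem AffineBasis.coord_nonneg_of_lineMap_mem {ι : Type*} (b : AffineBasis ι ℝ E) {j k : ι}
    (hjk : j ≠ k) {o : E} {t : ℝ} (ht : 0 < t)
    (h : lineMap (b k) o t ∈ convexHull ℝ (range b)) : 0 ≤ b.coord j o := by
  rw [b.convexHull_eq_nonneg_coord] at h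
  have hj := h j
  rw [AffineMap.apply_lineMap, b.coord_apply_ne hjk, lineMap_apply_ring'] at hj
  nlinarith

theorem AffineBasis.mem_convexHull_of_lineMap_mem {ι : Type*} (b : AffineBasis ι ℝ E) {k l : ι}
    (hkl : k ≠ l) {o : E} {s t : ℝ} (hs : 0 < s) (ht : 0 < t)
    (hk : lineMap (b k) o s ∈ convexHull ℝ (range b))
    (hl : lineMap (b l) o t ∈ convexHull ℝ (range b)) : o ∈ convexHull ℝ (range b) := by
  rw [b.convexHull_eq_nonneg_coord]
  intro j
  rcases eq_or_ne j k with rfl | hjk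
  · exact b.coord_nonneg_of_lineMap_mem hkl ht hl
  · exact b.coord_nonneg_of_lineMap_mem hjk hs hk

theorem AffineBasis.lineMap_notMem_convexHull {ι : Type*} (b : AffineBasis ι ℝ E) {i j : ι}
    (hij : i ≠ j) {o : E} (hi : b.coord i o < 0) (hj : b.coord j o < 0) (k : ι) {t : ℝ}
    (ht : 0 < t) : lineMap (b k) o t ∉ convexHull ℝ (range b) := by
  intro h
  rcases eq_or_ne i k with rfl | hik
  · exact (b.coord_nonneg_of_lineMap_mem hij.symm ht h).not_gt hj
  · exact (b.coord_nonneg_of_lineMap_mem hik ht h).not_gt hi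

end Convex

section Topology

theorem exists_mem_interior_of_subset_biUnion {X ι : Type*} [TopologicalSpace X] [BaireSpace X]
    {s : Set ι} (hs : s.Countable) {C : ι → Set X} (hC : ∀ i ∈ s, IsClosed (C i))
    {U : Set X} (hU : IsOpen U) (hne : U.Nonempty) (hcov : U ⊆ ⋃ i ∈ s, C i) :
    ∃ x ∈ U, ∃ i ∈ s, x ∈ interior (C i) := by
  have hdense : Dense (⋂ i ∈ s, (frontier (C i))ᶜ) :=
    dense_biInter_of_isOpen (fun i _ => isClosed_frontier.isOpen_compl) hs fun i hi =>
      interior_eq_empty_iff_dense_compl.1 (interior_frontier (hC i hi))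
  obtain ⟨x, hxU, hx⟩ := hdense.inter_open_nonempty U hU hne
  obtain ⟨i, hi, hxi⟩ := mem_iUnion₂.1 (hcov hxU)
  by_contra! h
  exact mem_iInter₂.1 hx i hi (show x ∈ frontier (C i) from ⟨subset_closure hxi, h x hxU i hi⟩)

end Topology

section Normed

variable {E : Type*} [NormedAddCommGroup E] [NormedSpace ℝ E]

theorem Convex.subset_closure_interior {s : Set E} (hs : Convex ℝ s) (hs' : (interior s).Nonempty) :
    s ⊆ closure (interior s) :=
  hs.closure_interior_eq_closure_of_nonempty_interior hs' ▸ subset_closure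

theorem Convex.disjoint_of_disjoint_interior {s t : Set E} (hs : Convex ℝ s)
    (hs' : (interior s).Nonempty) (h : Disjoint (interior s) (interior t)) :
    Disjoint s (interior t) :=
  (h.closure_left isOpen_interior).mono_left (hs.subset_closure_interior hs')

theorem exists_lineMap_mem_of_subset_biUnion {ι : Type*} {s : Finset ι} {C : ι → Set E}
    (hC : ∀ i ∈ s, IsClosed (C i)) {P : Set E} (hP : Convex ℝ P) (hcov : P ⊆ ⋃ i ∈ s, C i)
    {w o : E} (hw : w ∈ P) (ho : o ∈ P) :
    ∃ i ∈ s, w ∈ C i ∧ ∃ t : ℝ, 0 < t ∧ lineMap w o t ∈ C i := by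
  have hev : ∀ᶠ t in 𝓝[>] (0 : ℝ), ∃ i ∈ s, lineMap w o t ∈ C i := by
    filter_upwards [Ioo_mem_nhdsGT one_pos] with t ht
    simpa only [mem_iUnion₂, exists_prop] using hcov (hP.lineMap_mem hw ho ⟨ht.1.le, ht.2.le⟩)
  obtain ⟨i, hi, hfreq⟩ := s.frequently_exists.1 hev.frequently
  have htend : Tendsto (lineMap w o) (𝓝[>] (0 : ℝ)) (𝓝 w) := by
    simpa using (lineMap_continuous.tendsto (0 : ℝ)).mono_left nhdsWithin_le_nhds
  obtain ⟨t, ht, ht0⟩ := (hfreq.and_eventually self_mem_nhdsWithin).exists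
  exact ⟨i, hi, (hC i hi).mem_of_frequently_of_tendsto hfreq htend, t, ht0, ht⟩

variable [FiniteDimensional ℝ E] {ι : Type*} (b : AffineBasis ι ℝ E)

theorem AffineBasis.exists_coord_nonpos_of_disjoint_interior {t : Set E}
    (ht : (interior (convexHull ℝ t)).Nonempty)
    (hdisj : Disjoint (interior (convexHull ℝ (range b))) (interior (convexHull ℝ t)))
    (homni : ∀ x ∈ interior (convexHull ℝ t), ∀ i j, i ≠ j → b.coord i x < 0 → 0 ≤ b.coord j x) :
    ∃ i, ∀ x ∈ convexHull ℝ t, b.coord i x ≤ 0 ∧ ∀ j ≠ i, 0 ≤ b.coord j x := by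
  set T := interior (convexHull ℝ t)
  have hneg : ∀ x ∈ T, ∃ i, b.coord i x < 0 := by
    intro x hx
    by_contra! h
    have hxb : x ∈ convexHull ℝ (range b) := by rw [b.convexHull_eq_nonneg_coord]; exact h
    exact ((convex_convexHull ℝ _).disjoint_of_disjoint_interior
      (interior_convexHull_nonempty_iff_affineSpan_eq_top.2 b.tot) hdisj).ne_of_mem hxb hx rfl
  obtain ⟨z, hz⟩ := ht
  obtain ⟨i, hi⟩ := hneg z hz
  -- `T` is connected, and by `homni` the open sets `{coord i < 0}` and `⋃ j ≠ i, {coord j < 0}`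
  -- are disjoint on `T`.
  have hT : T ⊆ {x | b.coord i x < 0} := by
    refine ((isPreconnected_iff_subset_of_disjoint.1
      (convex_convexHull ℝ t).interior.isPreconnected) _
      (⋃ j ∈ ({i}ᶜ : Set ι), {x | b.coord j x < 0})
      (isOpen_lt (continuous_barycentric_coord b i) continuous_const)
      (isOpen_biUnion fun j _ => isOpen_lt (continuous_barycentric_coord b j) continuous_const)
      ?_ ?_).resolve_right ?_
    · intro x hx
      obtain ⟨k, hk⟩ := hneg x hx
      rcases eq_or_ne k i with rfl | hki
      · exact Or.inl hk
      · exact Or.inr (mem_iUnion₂.2 ⟨k, hki, hk⟩)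
    · refine eq_empty_iff_forall_notMem.2 fun x ⟨hx, hxi, hxj⟩ => ?_
      obtain ⟨k, hki, hk⟩ := mem_iUnion₂.1 hxj
      exact (homni x hx i k (Ne.symm hki) hxi).not_gt hk
    · intro hv
      obtain ⟨k, hki, hk⟩ := mem_iUnion₂.1 (hv hz)
      exact (homni z hz i k (Ne.symm hki) hi).not_gt hk
  have hK : IsClosed {x | b.coord i x ≤ 0 ∧ ∀ j ≠ i, 0 ≤ b.coord j x} := by
    simp only [ofPred_and, ofPred_forall]
    exact (isClosed_le (continuous_barycentric_coord b i) continuous_const).inter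
      (isClosed_iInter fun j => isClosed_iInter fun _ =>
        isClosed_le continuous_const (continuous_barycentric_coord b j))
  refine ⟨i, fun x hx => hK.closure_subset_iff.2 (fun y hy => ⟨(hT hy).le, fun j hj =>
    homni y hy i j hj.symm (hT hy)⟩) ((convex_convexHull ℝ t).subset_closure_interior ⟨z, hz⟩ hx)⟩

theorem AffineBasis.convexHull_inter_subset_of_disjoint_interior {V t : Set E}
    (hV : ConvexIndependent ℝ ((↑) : V → E)) (hbV : range b ⊆ V) (htV : t ⊆ V)
    (ht : (interior (convexHull ℝ t)).Nonempty)
    (hdisj : Disjoint (interior (convexHull ℝ (range b))) (interior (convexHull ℝ t)))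
    (homni : ∀ x ∈ convexHull ℝ t, ∀ i j, i ≠ j → b.coord i x < 0 → 0 ≤ b.coord j x) :
    convexHull ℝ (range b) ∩ convexHull ℝ t ⊆ convexHull ℝ (range b ∩ t) := by
  obtain ⟨i, hi⟩ := b.exists_coord_nonpos_of_disjoint_interior ht hdisj
    fun x hx => homni x (interior_subset hx)
  rintro x ⟨hxb, hxt⟩
  rw [b.convexHull_eq_nonneg_coord] at hxb
  have hface := convexHull_inter_setOf_nonneg_subset (b.coord i)
    (fun u hu => (hi u (subset_convexHull ℝ t hu)).1) (mem_inter hxt (hxb i))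
  refine convexHull_mono ?_ hface
  rintro u ⟨hut, hu0⟩
  refine ⟨?_, hut⟩
  have hub : u ∈ convexHull ℝ (range b) := by
    rw [b.convexHull_eq_nonneg_coord]
    intro j
    rcases eq_or_ne j i with rfl | hj
    · exact hu0.ge
    · exact (hi u (subset_convexHull ℝ t hut)).2 j hj
  exact convexIndependent_set_iff_inter_convexHull_subset.1 hV _ hbV ⟨htV hut, hub⟩

end Normed

namespace IsTet

variable {σ : Finset Pt3}

def affineBasis (h : IsTet σ) : AffineBasis σ ℝ Pt3 :=
  have hind : AffineIndependent ℝ (fun v : σ => (v : Pt3)) := h.2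
  ⟨_, hind, by rw [hind.affineSpan_eq_top_iff_card_eq_finrank_add_one]; simp [h.1]⟩

@[simp]
theorem affineBasis_apply (h : IsTet σ) (v : σ) : h.affineBasis v = v := rfl

@[simp]
theorem range_affineBasis (h : IsTet σ) : range h.affineBasis = σ := Subtype.range_coe

theorem interior_convexHull_nonempty (h : IsTet σ) :
    (interior (convexHull ℝ (σ : Set Pt3))).Nonempty := by
  rw [interior_convexHull_nonempty_iff_affineSpan_eq_top, ← h.range_affineBasis]
  exact h.affineBasis.tot

end IsTet

namespace IsDissection

variable {V : Finset Pt3} {D : Finset (Finset Pt3)}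

theorem exists_mem_interior (hD : IsDissection V D) {U : Set Pt3} (hU : IsOpen U)
    (hUV : (U ∩ convexHull ℝ (V : Set Pt3)).Nonempty) :
    ∃ o ∈ U ∩ convexHull ℝ (V : Set Pt3), ∃ σ ∈ D, o ∈ interior (convexHull ℝ (σ : Set Pt3)) := by
  obtain ⟨x, hxU, hxV⟩ := hUV
  obtain ⟨σ, hσ, -⟩ := mem_iUnion₂.1 (hD.2.2.ge hxV)
  have hint : (interior (convexHull ℝ (V : Set Pt3))).Nonempty :=
    (hD.1 σ hσ).1.interior_convexHull_nonempty.mono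
      (interior_mono (convexHull_mono (hD.1 σ hσ).2))
  have hUint : (U ∩ interior (convexHull ℝ (V : Set Pt3))).Nonempty :=
    mem_closure_iff.1 ((convex_convexHull ℝ _).subset_closure_interior hint hxV) U hU hxU
  obtain ⟨o, ⟨hoU, hoV⟩, σ₀, hσ₀, ho⟩ := exists_mem_interior_of_subset_biUnion D.countable_toSet
    (fun σ _ => σ.finite_toSet.isClosed_convexHull ℝ) (hU.inter isOpen_interior) hUint
    fun z hz => hD.2.2.ge (interior_subset hz.2)
  exact ⟨o, ⟨hoU, interior_subset hoV⟩, σ₀, hσ₀, ho⟩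

theorem exists_vertex_cone (hD : IsDissection V D)
    (hV : ConvexIndependent ℝ ((↑) : ↥(V : Set Pt3) → Pt3))
    {w : Pt3} (hw : w ∈ V) {o : Pt3} (ho : o ∈ convexHull ℝ (V : Set Pt3)) :
    ∃ τ ∈ D, w ∈ τ ∧ ∃ t : ℝ, 0 < t ∧ lineMap w o t ∈ convexHull ℝ (τ : Set Pt3) := by
  obtain ⟨τ, hτ, hwτ, t, ht, hmem⟩ := exists_lineMap_mem_of_subset_biUnion
    (fun τ _ => τ.finite_toSet.isClosed_convexHull ℝ) (convex_convexHull ℝ _) hD.2.2.ge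
    (subset_convexHull ℝ _ hw) ho
  have hwτ' : w ∈ τ :=
    convexIndependent_set_iff_inter_convexHull_subset.1 hV (τ : Set Pt3) (hD.1 τ hτ).2 ⟨hw, hwτ⟩
  exact ⟨τ, hτ, hwτ', t, ht, hmem⟩

theorem card_le_card_add_two (hD : IsDissection V D)
    (hV : ConvexIndependent ℝ ((↑) : ↥(V : Set Pt3) → Pt3))
    {o : Pt3} (ho : o ∈ convexHull ℝ (V : Set Pt3)) {σ₀ : Finset Pt3} (hσ₀ : σ₀ ∈ D)
    (ho₀ : o ∈ interior (convexHull ℝ (σ₀ : Set Pt3))) {σ : Finset Pt3} (hσ : σ ∈ D)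
    (hσo : ∀ w ∈ σ, ∀ t : ℝ, 0 < t → lineMap w o t ∉ convexHull ℝ (σ : Set Pt3)) :
    V.card ≤ D.card + 2 := by
  choose ψ hψD hψw hψo using fun w : V => hD.exists_vertex_cone hV w.2 ho
  have hψσ : ∀ w, ψ w ≠ σ := by
    intro w h
    obtain ⟨t, ht, hmem⟩ := hψo w
    exact hσo w (h ▸ hψw w) t ht (h ▸ hmem)
  have hσσ₀ : σ ≠ σ₀ := by
    rintro rfl
    obtain ⟨w, hw⟩ := Finset.card_pos.1 (by rw [(hD.1 σ hσ).1.1]; norm_num)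
    exact hσo w hw 1 one_pos (by simpa using interior_subset ho₀)
  have hinj : ∀ a b : V, ψ a ≠ σ₀ → ψ a = ψ b → a = b := by
    intro a b ha hab
    by_contra hne
    have htet := (hD.1 _ (hψD a)).1
    obtain ⟨s, hs, hsa⟩ := hψo a
    obtain ⟨t, ht, htb⟩ := hψo b
    have hoa : o ∈ convexHull ℝ (ψ a : Set Pt3) := by
      simpa using htet.affineBasis.mem_convexHull_of_lineMap_mem (k := ⟨a, hψw a⟩)
        (l := ⟨b, hab ▸ hψw b⟩) (by simpa using Subtype.coe_ne_coe.2 hne) hs ht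
        (by simpa using hsa) (by simpa [hab] using htb)
    exact ((convex_convexHull ℝ _).disjoint_of_disjoint_interior
      htet.interior_convexHull_nonempty
      (disjoint_iff_inter_eq_empty.2 (hD.2.1 _ (hψD a) _ hσ₀ ha))).ne_of_mem hoa ho₀ rfl
  have hfib : (Finset.univ.filter fun w : V => ψ w = σ₀).card ≤ 4 := calc
    _ ≤ σ₀.card := Finset.card_le_card_of_injOn Subtype.val
      (fun w hw => (Finset.mem_filter.1 hw).2 ▸ hψw w) Subtype.val_injective.injOn
    _ = 4 := (hD.1 σ₀ hσ₀).1.1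
  have hrest :
      (Finset.univ.filter fun w : V => ¬ψ w = σ₀).card ≤ ((D.erase σ₀).erase σ).card :=
    Finset.card_le_card_of_injOn ψ (fun w hw => Finset.mem_erase.2
        ⟨hψσ w, Finset.mem_erase.2 ⟨(Finset.mem_filter.1 hw).2, hψD w⟩⟩)
      fun a ha b _ hab => hinj a b (Finset.mem_filter.1 ha).2 hab
  have hsplit := Finset.card_filter_add_card_filter_not (s := Finset.univ) (fun w : V => ψ w = σ₀)
  rw [Finset.card_univ, Fintype.card_coe] at hsplit
  rw [Finset.card_erase_of_mem (Finset.mem_erase.2 ⟨hσσ₀, hσ⟩),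
    Finset.card_erase_of_mem hσ₀] at hrest
  have hDcard : 1 < D.card := Finset.one_lt_card.2 ⟨σ, hσ, σ₀, hσ₀, hσσ₀⟩
  omega

end IsDissection

theorem mismatching_dissection_lower_bound_general
    (V : Finset Pt3) (n : ℕ) (hn : V.card = n)
    -- V is the vertex set of a convex 3-polytope
    (hpos : ∀ v ∈ V, v ∉ convexHull ℝ ((V.erase v : Finset Pt3) : Set Pt3))
    (D : Finset (Finset Pt3)) (hD : IsDissection V D)
    (hmis : ¬ IsTriangulation V D) :
    n - 2 ≤ D.card := by
  have hV : ConvexIndependent ℝ ((↑) : ↥(V : Set Pt3) → Pt3) :=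
    convexIndependent_set_iff_notMem_convexHull_sdiff.2 fun v hv => by simpa using hpos v hv
  obtain ⟨σ, hσ, τ, hτ, hστ⟩ : ∃ σ ∈ D, ∃ τ ∈ D, ¬ convexHull ℝ (σ : Set Pt3) ∩
      convexHull ℝ (τ : Set Pt3) ⊆ convexHull ℝ ((σ ∩ τ : Finset Pt3) : Set Pt3) := by
    by_contra! h
    refine hmis ⟨hD, fun σ hσ τ hτ => (h σ hσ τ hτ).antisymm ?_⟩
    exact subset_inter (convexHull_mono (by simp)) (convexHull_mono (by simp))
  have hne : σ ≠ τ := by rintro rfl; simp at hστ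
  set b := (hD.1 σ hσ).1.affineBasis
  obtain ⟨p, hp, i, j, hij, hi, hj⟩ : ∃ p ∈ convexHull ℝ (τ : Set Pt3), ∃ i j, i ≠ j ∧
      b.coord i p < 0 ∧ b.coord j p < 0 := by
    by_contra! h
    refine hστ ?_
    simpa [b] using b.convexHull_inter_subset_of_disjoint_interior hV
      (by simpa [b] using (hD.1 σ hσ).2) (hD.1 τ hτ).2 (hD.1 τ hτ).1.interior_convexHull_nonempty
      (by simpa [b] using disjoint_iff_inter_eq_empty.2 (hD.2.1 σ hσ τ hτ hne)) h
  obtain ⟨o, ⟨⟨hoi, hoj⟩, hoV⟩, σ₀, hσ₀, ho₀⟩ := hD.exists_mem_interior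
    ((isOpen_lt (continuous_barycentric_coord b i) continuous_const).inter
      (isOpen_lt (continuous_barycentric_coord b j) continuous_const))
    ⟨p, ⟨hi, hj⟩, convexHull_mono (hD.1 τ hτ).2 hp⟩
  have := hD.card_le_card_add_two hV hoV hσ₀ ho₀ hσ fun w hw t ht => by
    simpa [b] using b.lineMap_notMem_convexHull hij hoi hoj ⟨w, hw⟩ ht
  omega

/-- Every mismatching dissection (a dissection that is not a
triangulation) of a convex 3-polytope with `n` vertices has at least `n - 2`
tetrahedra. -/
theorem mismatching_dissection_lower_bound
    (V : Finset Pt3) (n : ℕ) (hn : V.card = n)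
    -- V is the vertex set of a convex 3-polytope
    (hpos : ∀ v ∈ V, v ∉ convexHull ℝ ((V.erase v : Finset Pt3) : Set Pt3))
    (hspan : affineSpan ℝ (V : Set Pt3) = ⊤)
    (D : Finset (Finset Pt3)) (hD : IsDissection V D)
    (hmis : ¬ IsTriangulation V D) :
    n - 2 ≤ D.card :=
  mismatching_dissection_lower_bound_general V n hn hpos D hD hmis
end
end
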